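/- arXiv:2007.09760 — 5 statements merged into one kernel-verified Lean document; each statement's English description precedes it below -/
import Mathlib

section
/- For a finite Blaschke product B of degree n, the mean value of |B'| over the unit circle equals n; that is, (1/2π)∫₀^{2π} |B'(e^{it})| dt = n. -/
/-!
On the unit circle a Blaschke factor `b_a(z) = (z - a) / (1 - conj a * z)` has modulus one, and
`1 - conj a * z = z * conj (z - a)` turns its derivative into `b_a(z) z⁻¹ P_a(z)`, where
`P_a(z) = (1 - |a|²) / |z - a|²` is the Poisson kernel of the unit disk. By the product rule,
`|B'(z)| = ∑ₖ P_{a_k}(z) ≥ 0` on the circle, and the Poisson integral formula for the constant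
function `1` says that each `P_{a_k}` has mean value `1` there.
-/

open Complex Metric Real ComplexConjugate

noncomputable def blaschkeFactor (a z : ℂ) : ℂ := (z - a) / (1 - conj a * z)

lemma hasDerivAt_blaschkeFactor {a z : ℂ} (h : 1 - conj a * z ≠ 0) :
    HasDerivAt (blaschkeFactor a) ((1 - conj a * a) / (1 - conj a * z) ^ 2) z := by
  have hnum := (hasDerivAt_id' z).sub_const a
  have hden := ((hasDerivAt_id' z).const_mul (conj a)).const_sub 1
  exact (hnum.fun_div hden h).congr_deriv (by ring)

lemma circleIntegrable_poissonKernel {c w : ℂ} {R : ℝ} (hw : w ∈ ball c R) :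
    CircleIntegrable (poissonKernel c w) c R := by
  rw [poissonKernel_eq_re_herglotzRieszKernel]
  exact (continuous_re.comp_continuousOn
    (continuousOn_herglotzRieszKernel_sphere hw)).circleIntegrable'

lemma circleAverage_poissonKernel {c w : ℂ} {R : ℝ} (hw : w ∈ ball c R) :
    circleAverage (poissonKernel c w) c R = 1 := by
  simpa [← Pi.one_def] using
    (InnerProductSpace.harmonicOnNhd_const (1 : ℝ)).circleAverage_poissonKernel_smul
      (c := c) (R := R) hw

section UnitCircle

variable {a z : ℂ}

lemma one_sub_conj_mul_eq_mul_conj_sub (hz : ‖z‖ = 1) : 1 - conj a * z = z * conj (z - a) := by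
  have hzz : z * conj z = 1 := by rw [mul_conj', hz]; simp
  rw [map_sub, mul_sub, hzz]; ring

lemma norm_one_sub_conj_mul (hz : ‖z‖ = 1) : ‖1 - conj a * z‖ = ‖z - a‖ := by
  rw [one_sub_conj_mul_eq_mul_conj_sub hz, norm_mul, hz, one_mul, norm_conj]

lemma sub_ne_zero_of_norm_lt_one (ha : ‖a‖ < 1) (hz : ‖z‖ = 1) : z - a ≠ 0 :=
  sub_ne_zero.mpr (by rintro rfl; linarith)

lemma one_sub_conj_mul_ne_zero (ha : ‖a‖ < 1) (hz : ‖z‖ = 1) : 1 - conj a * z ≠ 0 := by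
  rw [← norm_ne_zero_iff, norm_one_sub_conj_mul hz, norm_ne_zero_iff]
  exact sub_ne_zero_of_norm_lt_one ha hz

lemma norm_blaschkeFactor (ha : ‖a‖ < 1) (hz : ‖z‖ = 1) : ‖blaschkeFactor a z‖ = 1 := by
  rw [blaschkeFactor, norm_div, norm_one_sub_conj_mul hz,
    div_self (norm_ne_zero_iff.mpr (sub_ne_zero_of_norm_lt_one ha hz))]

lemma poissonKernel_zero_apply_of_norm_eq_one (hz : ‖z‖ = 1) :
    poissonKernel 0 a z = (1 - ‖a‖ ^ 2) / ‖z - a‖ ^ 2 := by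
  simp [poissonKernel, hz]

lemma poissonKernel_zero_nonneg (ha : ‖a‖ < 1) (hz : ‖z‖ = 1) : 0 ≤ poissonKernel 0 a z := by
  rw [poissonKernel_zero_apply_of_norm_eq_one hz]
  exact div_nonneg (by nlinarith [norm_nonneg a]) (sq_nonneg _)

lemma hasDerivAt_blaschkeFactor_of_norm_eq_one (ha : ‖a‖ < 1) (hz : ‖z‖ = 1) :
    HasDerivAt (blaschkeFactor a) (blaschkeFactor a z * z⁻¹ * poissonKernel 0 a z) z := by
  refine (hasDerivAt_blaschkeFactor (one_sub_conj_mul_ne_zero ha hz)).congr_deriv ?_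
  have hza := sub_ne_zero_of_norm_lt_one ha hz
  have hnorm : (‖z - a‖ : ℂ) ^ 2 = (z - a) * conj (z - a) := (mul_conj' _).symm
  rw [poissonKernel_zero_apply_of_norm_eq_one hz, blaschkeFactor,
    one_sub_conj_mul_eq_mul_conj_sub hz]
  push_cast
  rw [hnorm, conj_mul']
  field_simp

end UnitCircle

section BlaschkeProduct

variable {ι : Type*} [Fintype ι] {a : ι → ℂ} {z : ℂ}

lemma hasDerivAt_prod_blaschkeFactor (ha : ∀ k, ‖a k‖ < 1) (hz : ‖z‖ = 1) :
    HasDerivAt (fun w ↦ ∏ k, blaschkeFactor (a k) w)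
      ((∏ k, blaschkeFactor (a k) z) * z⁻¹ * ∑ k, (poissonKernel 0 (a k) z : ℂ)) z := by
  classical
  refine (HasDerivAt.fun_finsetProd
    fun k _ ↦ hasDerivAt_blaschkeFactor_of_norm_eq_one (ha k) hz).congr_deriv ?_
  rw [Finset.mul_sum]
  refine Finset.sum_congr rfl fun k _ ↦ ?_
  rw [smul_eq_mul, ← Finset.prod_erase_mul _ _ (Finset.mem_univ k)]
  ring

lemma norm_deriv_blaschkeProduct {α : ℂ} (hα : ‖α‖ = 1) (ha : ∀ k, ‖a k‖ < 1) (hz : ‖z‖ = 1) :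
    ‖deriv (fun w ↦ α * ∏ k, blaschkeFactor (a k) w) z‖ = ∑ k, poissonKernel 0 (a k) z := by
  rw [((hasDerivAt_prod_blaschkeFactor ha hz).const_mul α).deriv, norm_mul, norm_mul, norm_mul,
    hα, norm_prod, Finset.prod_eq_one fun k _ ↦ norm_blaschkeFactor (ha k) hz, norm_inv, hz,
    ← ofReal_sum, norm_real,
    Real.norm_of_nonneg (Finset.sum_nonneg fun k _ ↦ poissonKernel_zero_nonneg (ha k) hz)]
  simp

end BlaschkeProduct

theorem mean_deriv_blaschke_general (n : ℕ) (a : Fin n → ℂ)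
    (ha : ∀ k, ‖a k‖ < 1) (α : ℂ) (hα : ‖α‖ = 1)
    (B : ℂ → ℂ)
    (hB : ∀ z, B z = α * ∏ k, (z - a k) / (1 - (starRingEnd ℂ) (a k) * z)) :
    (1 / (2 * Real.pi)) *
      ∫ t in (0 : ℝ)..(2 * Real.pi),
        ‖deriv B (Complex.exp (t * Complex.I))‖ = n := by
  obtain rfl : B = fun w ↦ α * ∏ k, blaschkeFactor (a k) w := funext hB
  have ha_ball k : a k ∈ ball 0 1 := mem_ball_zero_iff.mpr (ha k)
  calc (1 / (2 * π)) * ∫ t in (0 : ℝ)..(2 * π), ‖deriv _ (exp (t * I))‖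
      = circleAverage (fun z ↦ ‖deriv (fun w ↦ α * ∏ k, blaschkeFactor (a k) w) z‖) 0 1 := by
        simp [circleAverage_def, circleMap_zero]
    _ = circleAverage (fun z ↦ ∑ k, poissonKernel 0 (a k) z) 0 1 :=
        circleAverage_congr_sphere fun z hz ↦
          norm_deriv_blaschkeProduct hα ha (by simpa using hz)
    _ = ∑ k, circleAverage (poissonKernel 0 (a k)) 0 1 :=
        circleAverage_fun_sum fun k _ ↦ circleIntegrable_poissonKernel (ha_ball k)
    _ = n := by simp [circleAverage_poissonKernel (ha_ball _)]

/-- For a finite Blaschke product `B` of degree `n`, the mean value of `|B'|`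
over the unit circle equals `n`. -/
theorem mean_deriv_blaschke (n : ℕ) (hn : 1 ≤ n) (a : Fin n → ℂ)
    (ha : ∀ k, ‖a k‖ < 1) (α : ℂ) (hα : ‖α‖ = 1)
    (B : ℂ → ℂ)
    (hB : ∀ z, B z = α * ∏ k, (z - a k) / (1 - (starRingEnd ℂ) (a k) * z)) :
    (1 / (2 * Real.pi)) *
      ∫ t in (0 : ℝ)..(2 * Real.pi),
        ‖deriv B (Complex.exp (t * Complex.I))‖ = n :=
  mean_deriv_blaschke_general n a ha α hα B hB
end

section
/- Let B be a finite Blaschke product of degree n, and set M = sup_{|z|=1}|B'(z)|, m = inf_{|z|=1}|B'(z)|. Then m ≥ n/(M - n + 1). -/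
/-!
Write `B = P / Q` with `P = α ∏ (X - aₖ)` and `Q = ∏ (1 - āₖ X)`. On the unit circle the
logarithmic derivative satisfies `z (P'/P - Q'/Q)(z) = S(z) := ∑ (1 - |aₖ|²) / |z - aₖ|²`, a
nonnegative real, and since `|B| = 1` there, `|B'(z)| = S(z)`.

For `|w| = 1` the solutions of `z B(z) = w` are the roots of `R = w Q - X P`, of degree `n + 1`.
They all lie on the circle, where `z R'(z) = -w Q(z) (1 + S(z)) ≠ 0`, so they are simple, and the
partial fraction expansion of `Q / R` evaluated at `0` gives `∑ⱼ 1 / (1 + S(zⱼ)) = 1`. Taking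
`w = z₀ B(z₀)` for a point `z₀` where `S` attains its minimum `m`, the other `n` roots contribute
at least `n / (1 + M)`, so `1 / (1 + m) + n / (1 + M) ≤ 1`, which rearranges to the claim.
-/

open Polynomial Finset ComplexConjugate

namespace Complex

variable {a z : ℂ}

lemma sq_norm_one_sub_conj_mul_sub_sq_norm_sub (a z : ℂ) :
    ‖1 - conj a * z‖ ^ 2 - ‖z - a‖ ^ 2 = (1 - ‖a‖ ^ 2) * (1 - ‖z‖ ^ 2) := by
  simp only [Complex.sq_norm, normSq_apply, sub_re, sub_im, mul_re, mul_im, one_re, one_im,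
    conj_re, conj_im]
  ring

lemma norm_sub_le_norm_one_sub_conj_mul (ha : ‖a‖ ≤ 1) (hz : ‖z‖ ≤ 1) :
    ‖z - a‖ ≤ ‖1 - conj a * z‖ := by
  have hid := sq_norm_one_sub_conj_mul_sub_sq_norm_sub a z
  have hsign : 0 ≤ (1 - ‖a‖ ^ 2) * (1 - ‖z‖ ^ 2) :=
    mul_nonneg (by nlinarith [norm_nonneg a]) (by nlinarith [norm_nonneg z])
  exact (pow_le_pow_iff_left₀ (norm_nonneg _) (norm_nonneg _) two_ne_zero).1 (by linarith)

lemma norm_one_sub_conj_mul_le_norm_sub (ha : ‖a‖ ≤ 1) (hz : 1 ≤ ‖z‖) :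
    ‖1 - conj a * z‖ ≤ ‖z - a‖ := by
  have hid := sq_norm_one_sub_conj_mul_sub_sq_norm_sub a z
  have hsign : (1 - ‖a‖ ^ 2) * (1 - ‖z‖ ^ 2) ≤ 0 :=
    mul_nonpos_of_nonneg_of_nonpos (by nlinarith [norm_nonneg a]) (by nlinarith [norm_nonneg z])
  exact (pow_le_pow_iff_left₀ (norm_nonneg _) (norm_nonneg _) two_ne_zero).1 (by linarith)

lemma one_sub_conj_mul_ne_zero (ha : ‖a‖ < 1) (hz : ‖z‖ ≤ 1) : 1 - conj a * z ≠ 0 := by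
  have : ‖conj a * z‖ < 1 := by
    rw [norm_mul, norm_conj]
    nlinarith [norm_nonneg a, norm_nonneg z]
  intro h
  rw [← sub_eq_zero.1 h, norm_one] at this
  exact this.false

lemma one_sub_conj_mul_eq_mul_conj (hz : ‖z‖ = 1) : 1 - conj a * z = z * conj (z - a) := by
  have : z * conj z = 1 := by rw [mul_conj', hz]; norm_num
  rw [map_sub]
  linear_combination -this

lemma norm_one_sub_conj_mul_eq (hz : ‖z‖ = 1) : ‖1 - conj a * z‖ = ‖z - a‖ := by
  rw [one_sub_conj_mul_eq_mul_conj hz, norm_mul, hz, norm_conj, one_mul]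

/-- `z` times the logarithmic derivative of `(z - a) / (1 - ā z)`: on the unit circle it is the
Poisson kernel. -/
lemma mul_inv_sub_add_conj_div (hz : ‖z‖ = 1) (hza : z ≠ a) :
    z * ((z - a)⁻¹ + conj a / (1 - conj a * z)) = ((1 - ‖a‖ ^ 2) / ‖z - a‖ ^ 2 : ℝ) := by
  have hz0 : z ≠ 0 := by rintro rfl; simp at hz
  have hza' : z - a ≠ 0 := sub_ne_zero.2 hza
  have hzz : z * conj z = 1 := by rw [mul_conj', hz]; norm_num
  rw [one_sub_conj_mul_eq_mul_conj hz]
  push_cast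
  rw [← mul_conj' (z - a), ← mul_conj' a]
  have hza'' : conj (z - a) ≠ 0 := (_root_.map_ne_zero _).2 hza'
  field_simp
  rw [map_sub]
  linear_combination hzz

end Complex

open Complex

lemma Polynomial.eval_derivative_eq_logDeriv_mul {𝕜 : Type*} [NontriviallyNormedField 𝕜]
    (p : 𝕜[X]) {x : 𝕜} (hx : p.eval x ≠ 0) :
    p.derivative.eval x = logDeriv (fun y => p.eval y) x * p.eval x := by
  rw [logDeriv_apply, Polynomial.deriv, div_mul_cancel₀ _ hx]

lemma Polynomial.eval_eq_sum_roots_div {F : Type*} [Field F] [DecidableEq F] {p f : F[X]}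
    (hsplit : Multiset.card p.roots = p.natDegree) (hnodup : p.roots.Nodup)
    (hdeg : f.natDegree < p.natDegree) {x : F} (hx : ¬p.IsRoot x) :
    f.eval x = ∑ z ∈ p.roots.toFinset, p.eval x * f.eval z / ((x - z) * p.derivative.eval z) := by
  set Z := p.roots.toFinset
  have hZ : Z.val = p.roots := by rw [Multiset.toFinset_val, Multiset.dedup_eq_self.2 hnodup]
  have hp : p = C p.leadingCoeff * Lagrange.nodal Z id := by
    conv_lhs => rw [← C_leadingCoeff_mul_prod_multiset_X_sub_C hsplit, ← hZ]
    rfl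
  have hl : p.leadingCoeff ≠ 0 := leadingCoeff_ne_zero.2 fun h => hx (by simp [h])
  have hxZ : ∀ z ∈ Z, x ≠ id z := fun z hz h =>
    hx (h ▸ isRoot_of_mem_roots (Multiset.mem_toFinset.1 hz))
  have hfdeg : f.degree < #Z := by
    rw [card_def, hZ, hsplit]
    exact (degree_le_natDegree).trans_lt (by exact_mod_cast hdeg)
  conv_lhs => rw [Lagrange.eq_interpolate (Set.injOn_id _) hfdeg,
    Lagrange.eval_interpolate_not_at_node _ hxZ, mul_sum]
  refine sum_congr rfl fun z hz => ?_
  rw [Lagrange.nodalWeight_eq_eval_derivative_nodal hz, hp, derivative_C_mul]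
  simp only [eval_mul, eval_C, id]
  field_simp

section Blaschke

variable {ι : Type*} [Fintype ι] (α : ℂ) (a : ι → ℂ)

noncomputable def blaschkeNum : ℂ[X] := C α * ∏ k, (X - C (a k))

noncomputable def blaschkeDen : ℂ[X] := ∏ k, (1 - C (conj (a k)) * X)

noncomputable def poissonSum (z : ℂ) : ℝ := ∑ k, (1 - ‖a k‖ ^ 2) / ‖z - a k‖ ^ 2

variable {α a} {z : ℂ}

@[simp]
lemma eval_blaschkeNum : (blaschkeNum α a).eval z = α * ∏ k, (z - a k) := by
  simp [blaschkeNum, eval_prod]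

@[simp]
lemma eval_blaschkeDen : (blaschkeDen a).eval z = ∏ k, (1 - conj (a k) * z) := by
  simp [blaschkeDen, eval_prod]

lemma eval_blaschkeNum_ne_zero (hα : α ≠ 0) (hz : ∀ k, z ≠ a k) : (blaschkeNum α a).eval z ≠ 0 := by
  rw [eval_blaschkeNum]
  exact mul_ne_zero hα (prod_ne_zero_iff.2 fun k _ => sub_ne_zero.2 (hz k))

lemma eval_blaschkeDen_ne_zero (ha : ∀ k, ‖a k‖ < 1) (hz : ‖z‖ ≤ 1) :
    (blaschkeDen a).eval z ≠ 0 := by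
  rw [eval_blaschkeDen]
  exact prod_ne_zero_iff.2 fun k _ => one_sub_conj_mul_ne_zero (ha k) hz

lemma norm_eval_blaschkeNum_eq (hα : ‖α‖ = 1) (hz : ‖z‖ = 1) :
    ‖(blaschkeNum α a).eval z‖ = ‖(blaschkeDen a).eval z‖ := by
  simp only [eval_blaschkeNum, eval_blaschkeDen, norm_mul, hα, one_mul, norm_prod,
    norm_one_sub_conj_mul_eq hz]

lemma logDeriv_eval_blaschkeNum (hα : α ≠ 0) (hz : ∀ k, z ≠ a k) :
    logDeriv (fun x => (blaschkeNum α a).eval x) z = ∑ k, (z - a k)⁻¹ := by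
  simp only [eval_blaschkeNum]
  rw [logDeriv_const_mul _ _ hα, logDeriv_prod (fun k _ => sub_ne_zero.2 (hz k))
    (fun k _ => by fun_prop)]
  simp [logDeriv_apply]

lemma logDeriv_eval_blaschkeDen (hz : ∀ k, 1 - conj (a k) * z ≠ 0) :
    logDeriv (fun x => (blaschkeDen a).eval x) z = ∑ k, -conj (a k) / (1 - conj (a k) * z) := by
  simp only [eval_blaschkeDen]
  rw [logDeriv_prod (fun k _ => hz k) (fun k _ => by fun_prop)]
  simp [logDeriv_apply, neg_div]

lemma mul_eval_wronskian_blaschkeDen_blaschkeNum (hα : α ≠ 0) (ha : ∀ k, ‖a k‖ < 1)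
    (hz : ‖z‖ = 1) :
    z * (wronskian (blaschkeDen a) (blaschkeNum α a)).eval z
      = (blaschkeNum α a).eval z * (blaschkeDen a).eval z * poissonSum a z := by
  have hza : ∀ k, z ≠ a k := fun k h => (ha k).ne (h ▸ hz)
  have hP := eval_blaschkeNum_ne_zero hα hza
  have hQ := eval_blaschkeDen_ne_zero ha hz.le
  have hS : z * (∑ k, (z - a k)⁻¹ - ∑ k, -conj (a k) / (1 - conj (a k) * z)) = poissonSum a z := by
    simp only [poissonSum, ofReal_sum, ← mul_inv_sub_add_conj_div hz (hza _), ← sum_sub_distrib,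
      mul_sum, neg_div, sub_neg_eq_add]
  rw [wronskian, eval_sub, eval_mul, eval_mul, eval_derivative_eq_logDeriv_mul _ hP,
    eval_derivative_eq_logDeriv_mul _ hQ, logDeriv_eval_blaschkeNum hα hza,
    logDeriv_eval_blaschkeDen fun k => one_sub_conj_mul_ne_zero (ha k) hz.le, ← hS]
  ring

lemma poissonSum_nonneg (ha : ∀ k, ‖a k‖ ≤ 1) (z : ℂ) : 0 ≤ poissonSum a z :=
  sum_nonneg fun k _ => div_nonneg (by nlinarith [ha k, norm_nonneg (a k)]) (sq_nonneg _)

lemma continuousOn_poissonSum (ha : ∀ k, ‖a k‖ < 1) :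
    ContinuousOn (poissonSum a) (Metric.sphere 0 1) := by
  refine continuousOn_finsetSum _ fun k _ => continuousOn_const.div (by fun_prop) fun z hz => ?_
  have : z ≠ a k := fun h => (ha k).ne (by simpa [h] using hz)
  simpa [sub_eq_zero] using this

variable (α a) in
noncomputable def blaschkeProd (z : ℂ) : ℂ := α * ∏ k, (z - a k) / (1 - conj (a k) * z)

lemma blaschkeProd_eq_div :
    blaschkeProd α a = fun z => (blaschkeNum α a).eval z / (blaschkeDen a).eval z := by
  ext z
  rw [blaschkeProd, eval_blaschkeNum, eval_blaschkeDen, prod_div_distrib, mul_div_assoc]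

lemma norm_deriv_blaschkeProd (hα : ‖α‖ = 1) (ha : ∀ k, ‖a k‖ < 1) (hz : ‖z‖ = 1) :
    ‖deriv (blaschkeProd α a) z‖ = poissonSum a z := by
  have hα0 : α ≠ 0 := norm_ne_zero_iff.1 (by simp [hα])
  have hQ := eval_blaschkeDen_ne_zero ha hz.le
  have hW : ‖(wronskian (blaschkeDen a) (blaschkeNum α a)).eval z‖
      = ‖(blaschkeDen a).eval z‖ ^ 2 * poissonSum a z := by
    have := congrArg norm (mul_eval_wronskian_blaschkeDen_blaschkeNum hα0 ha hz)
    rw [norm_mul, norm_mul, norm_mul, hz, one_mul, norm_eval_blaschkeNum_eq hα hz, norm_real,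
      Real.norm_of_nonneg (poissonSum_nonneg (fun k => (ha k).le) z)] at this
    rw [this]
    ring
  have hd : deriv (blaschkeProd α a) z
      = (wronskian (blaschkeDen a) (blaschkeNum α a)).eval z / (blaschkeDen a).eval z ^ 2 := by
    rw [blaschkeProd_eq_div, (((blaschkeNum α a).hasDerivAt z).fun_div
      ((blaschkeDen a).hasDerivAt z) hQ).deriv, wronskian]
    simp only [eval_sub, eval_mul]
    ring
  rw [hd, norm_div, norm_pow, hW, mul_div_cancel_left₀ _ (by positivity)]

variable {w : ℂ}

lemma natDegree_blaschkeNum (hα : α ≠ 0) : (blaschkeNum α a).natDegree = Fintype.card ι := by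
  rw [blaschkeNum, natDegree_C_mul hα, natDegree_prod _ _ fun k _ => X_sub_C_ne_zero (a k)]
  simp

lemma natDegree_blaschkeDen_le : (blaschkeDen a).natDegree ≤ Fintype.card ι :=
  (natDegree_prod_le _ _).trans <|
    (sum_le_sum fun k _ => (by compute_degree : (1 - C (conj (a k)) * X).natDegree ≤ 1)).trans
      (by simp)

lemma norm_eval_blaschkeNum_le (hα : ‖α‖ = 1) (ha : ∀ k, ‖a k‖ ≤ 1) (hz : ‖z‖ ≤ 1) :
    ‖(blaschkeNum α a).eval z‖ ≤ ‖(blaschkeDen a).eval z‖ := by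
  simp only [eval_blaschkeNum, eval_blaschkeDen, norm_mul, hα, one_mul, norm_prod]
  exact prod_le_prod (fun _ _ => norm_nonneg _)
    fun k _ => norm_sub_le_norm_one_sub_conj_mul (ha k) hz

lemma norm_eval_blaschkeDen_le (hα : ‖α‖ = 1) (ha : ∀ k, ‖a k‖ ≤ 1) (hz : 1 ≤ ‖z‖) :
    ‖(blaschkeDen a).eval z‖ ≤ ‖(blaschkeNum α a).eval z‖ := by
  simp only [eval_blaschkeNum, eval_blaschkeDen, norm_mul, hα, one_mul, norm_prod]
  exact prod_le_prod (fun _ _ => norm_nonneg _)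
    fun k _ => norm_one_sub_conj_mul_le_norm_sub (ha k) hz

variable (α a) in
/-- The roots of `levelPoly α a w` are the solutions of `z * blaschkeProd α a z = w`. -/
noncomputable def levelPoly (w : ℂ) : ℂ[X] := C w * blaschkeDen a - X * blaschkeNum α a

lemma natDegree_levelPoly (hα : α ≠ 0) : (levelPoly α a w).natDegree = Fintype.card ι + 1 := by
  have hP : blaschkeNum α a ≠ 0 :=
    mul_ne_zero (C_ne_zero.2 hα) (prod_ne_zero_iff.2 fun k _ => X_sub_C_ne_zero (a k))
  rw [levelPoly, natDegree_sub_eq_right_of_natDegree_lt] <;>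
    rw [natDegree_X_mul hP, natDegree_blaschkeNum hα]
  exact (natDegree_C_mul_le _ _).trans_lt (Nat.lt_succ_of_le natDegree_blaschkeDen_le)

lemma levelPoly_ne_zero (hα : α ≠ 0) : levelPoly α a w ≠ 0 := fun h => by
  simpa [h] using natDegree_levelPoly (a := a) (w := w) hα

lemma eval_levelPoly :
    (levelPoly α a w).eval z = w * (blaschkeDen a).eval z - z * (blaschkeNum α a).eval z := by
  simp [levelPoly]

lemma norm_eq_one_of_isRoot_levelPoly (hα : ‖α‖ = 1) (ha : ∀ k, ‖a k‖ < 1) (hw : ‖w‖ = 1)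
    (hz : (levelPoly α a w).IsRoot z) : ‖z‖ = 1 := by
  have hQP : ‖(blaschkeDen a).eval z‖ = ‖z‖ * ‖(blaschkeNum α a).eval z‖ := by
    have hR := hz.eq_zero
    rw [eval_levelPoly, sub_eq_zero] at hR
    rw [← norm_mul, ← hR, norm_mul, hw, one_mul]
  rcases lt_trichotomy ‖z‖ 1 with h | h | h
  · have hQ := norm_pos_iff.2 (eval_blaschkeDen_ne_zero ha h.le)
    have := norm_eval_blaschkeNum_le hα (fun k => (ha k).le) h.le
    nlinarith [mul_le_mul_of_nonneg_left this (norm_nonneg z)]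
  · exact h
  · have hP : 0 < ‖(blaschkeNum α a).eval z‖ := norm_pos_iff.2 <|
      eval_blaschkeNum_ne_zero (norm_ne_zero_iff.1 (by simp [hα]))
        fun k hk => (ha k).not_ge (hk ▸ h.le)
    have := norm_eval_blaschkeDen_le hα (fun k => (ha k).le) h.le
    nlinarith

lemma mul_eval_derivative_levelPoly (hα : α ≠ 0) (ha : ∀ k, ‖a k‖ < 1) (hz : ‖z‖ = 1)
    (hroot : (levelPoly α a w).IsRoot z) :
    z * (levelPoly α a w).derivative.eval z
      = -(w * (blaschkeDen a).eval z * (1 + poissonSum a z)) := by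
  have hQ := eval_blaschkeDen_ne_zero ha hz.le
  have hW := mul_eval_wronskian_blaschkeDen_blaschkeNum hα ha hz
  have hR := hroot.eq_zero
  rw [eval_levelPoly] at hR
  simp only [wronskian, eval_sub, eval_mul] at hW
  apply mul_left_cancel₀ hQ
  simp only [levelPoly, derivative_sub, derivative_mul, derivative_C, derivative_X, eval_add,
    eval_sub, eval_mul, eval_C, eval_X, zero_mul, zero_add, one_mul]
  linear_combination (-z) * hW
    + (z * (blaschkeDen a).derivative.eval z + (blaschkeDen a).eval z * (1 + poissonSum a z)) * hR

lemma nodup_roots_levelPoly (hα : ‖α‖ = 1) (ha : ∀ k, ‖a k‖ < 1) (hw : ‖w‖ = 1) :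
    (levelPoly α a w).roots.Nodup := by
  classical
  have hα0 : α ≠ 0 := norm_ne_zero_iff.1 (by simp [hα])
  refine Multiset.nodup_iff_count_le_one.2 fun z => ?_
  rw [count_roots]
  by_contra! hz
  obtain ⟨hroot, hroot'⟩ := (one_lt_rootMultiplicity_iff_isRoot (levelPoly_ne_zero hα0)).1 hz
  have hz1 := norm_eq_one_of_isRoot_levelPoly hα ha hw hroot
  have := mul_eval_derivative_levelPoly hα0 ha hz1 hroot
  rw [hroot'.eq_zero, mul_zero, zero_eq_neg] at this
  refine mul_ne_zero (mul_ne_zero (norm_ne_zero_iff.1 (by simp [hw]))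
    (eval_blaschkeDen_ne_zero ha hz1.le)) ?_ this
  exact_mod_cast (add_pos_of_pos_of_nonneg one_pos (poissonSum_nonneg (fun k => (ha k).le) z)).ne'

lemma sum_roots_levelPoly_inv_one_add_poissonSum (hα : ‖α‖ = 1) (ha : ∀ k, ‖a k‖ < 1)
    (hw : ‖w‖ = 1) :
    ∑ z ∈ (levelPoly α a w).roots.toFinset, (1 + poissonSum a z)⁻¹ = 1 := by
  classical
  have hα0 : α ≠ 0 := norm_ne_zero_iff.1 (by simp [hα])
  have hw0 : w ≠ 0 := norm_ne_zero_iff.1 (by simp [hw])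
  have h0 : (levelPoly α a w).eval 0 = w := by simp [eval_levelPoly]
  have hdeg : (blaschkeDen a).natDegree < (levelPoly α a w).natDegree := by
    rw [natDegree_levelPoly hα0]
    exact Nat.lt_succ_of_le natDegree_blaschkeDen_le
  have := eval_eq_sum_roots_div IsAlgClosed.card_roots_eq_natDegree
    (nodup_roots_levelPoly hα ha hw) hdeg (x := 0) (by simp [IsRoot, h0, hw0])
  rw [h0, show (blaschkeDen a).eval 0 = 1 by simp] at this
  refine Complex.ofReal_injective ?_
  push_cast
  refine (this.trans (sum_congr rfl fun z hz => ?_)).symm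
  have hroot := isRoot_of_mem_roots (Multiset.mem_toFinset.1 hz)
  have hz1 := norm_eq_one_of_isRoot_levelPoly hα ha hw hroot
  rw [zero_sub, neg_mul, mul_eval_derivative_levelPoly hα0 ha hz1 hroot, neg_neg,
    div_mul_cancel_left₀ (mul_ne_zero hw0 (eval_blaschkeDen_ne_zero ha hz1.le))]

lemma inv_one_add_poissonSum_add_card_mul_le_one (hα : ‖α‖ = 1) (ha : ∀ k, ‖a k‖ < 1) {M : ℝ}
    (hM : ∀ z : ℂ, ‖z‖ = 1 → poissonSum a z ≤ M) {z₀ : ℂ} (hz₀ : ‖z₀‖ = 1) :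
    (1 + poissonSum a z₀)⁻¹ + Fintype.card ι * (1 + M)⁻¹ ≤ 1 := by
  classical
  have hα0 : α ≠ 0 := norm_ne_zero_iff.1 (by simp [hα])
  have hQ := eval_blaschkeDen_ne_zero ha hz₀.le
  set w := z₀ * ((blaschkeNum α a).eval z₀ / (blaschkeDen a).eval z₀) with hw_def
  have hw : ‖w‖ = 1 := by
    rw [norm_mul, norm_div, norm_eval_blaschkeNum_eq hα hz₀, hz₀, div_self (norm_ne_zero_iff.2 hQ),
      one_mul]
  have hroot : (levelPoly α a w).IsRoot z₀ := by
    rw [IsRoot, eval_levelPoly, hw_def, mul_assoc, div_mul_cancel₀ _ hQ, sub_self]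
  set Z := (levelPoly α a w).roots.toFinset
  have hz₀Z : z₀ ∈ Z := Multiset.mem_toFinset.2 ((mem_roots (levelPoly_ne_zero hα0)).2 hroot)
  have hcard : #(Z.erase z₀) = Fintype.card ι := by
    rw [card_erase_of_mem hz₀Z, Multiset.toFinset_card_of_nodup (nodup_roots_levelPoly hα ha hw),
      IsAlgClosed.card_roots_eq_natDegree, natDegree_levelPoly hα0, Nat.add_sub_cancel]
  have hle : ∀ z ∈ Z.erase z₀, (1 + M)⁻¹ ≤ (1 + poissonSum a z)⁻¹ := fun z hz => by
    have hz1 := norm_eq_one_of_isRoot_levelPoly hα ha hw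
      (isRoot_of_mem_roots (Multiset.mem_toFinset.1 (mem_of_mem_erase hz)))
    have := poissonSum_nonneg (fun k => (ha k).le) z
    exact inv_anti₀ (by linarith) (by linarith [hM z hz1])
  have hsum := sum_roots_levelPoly_inv_one_add_poissonSum hα ha hw
  rw [← add_sum_erase _ _ hz₀Z] at hsum
  suffices (Fintype.card ι : ℝ) * (1 + M)⁻¹ ≤ ∑ z ∈ Z.erase z₀, (1 + poissonSum a z)⁻¹ by linarith
  calc (Fintype.card ι : ℝ) * (1 + M)⁻¹ = #(Z.erase z₀) • (1 + M)⁻¹ := by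
        rw [hcard, nsmul_eq_mul]
    _ ≤ _ := card_nsmul_le_sum _ _ _ hle

end Blaschke

lemma div_le_of_inv_one_add_add_mul_inv_le_one {n m M : ℝ} (hn : 0 ≤ n) (hm : 0 ≤ m)
    (h : (1 + m)⁻¹ + n * (1 + M)⁻¹ ≤ 1) : n / (M - n + 1) ≤ m := by
  rcases le_or_gt (M - n + 1) 0 with hD | hD
  · exact (div_nonpos_of_nonneg_of_nonpos hn hD).trans hm
  · have h1m : 0 < 1 + m := by linarith
    have h1M : 0 < 1 + M := by linarith
    have hpos := mul_pos h1m h1M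
    have hexpand : (1 + m) * (1 + M) * ((1 + m)⁻¹ + n * (1 + M)⁻¹) = (1 + M) + n * (1 + m) := by
      field_simp
    rw [div_le_iff₀ hD]
    nlinarith [mul_le_mul_of_nonneg_left h hpos.le]

theorem inf_ge_of_sup_general (n : ℕ) (a : Fin n → ℂ)
    (ha : ∀ k, ‖a k‖ < 1) (α : ℂ) (hα : ‖α‖ = 1)
    (B : ℂ → ℂ)
    (hB : ∀ z, B z = α * ∏ k, (z - a k) / (1 - (starRingEnd ℂ) (a k) * z))
    (M m : ℝ)
    (hM : M = sSup ((fun z => ‖deriv B z‖) '' {z : ℂ | ‖z‖ = 1}))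
    (hm : m = sInf ((fun z => ‖deriv B z‖) '' {z : ℂ | ‖z‖ = 1})) :
    n / (M - n + 1) ≤ m := by
  have hsphere : {z : ℂ | ‖z‖ = 1} = Metric.sphere 0 1 := by ext; simp
  have himage :
      (fun z => ‖deriv B z‖) '' {z : ℂ | ‖z‖ = 1} = poissonSum a '' Metric.sphere 0 1 := by
    rw [hsphere, show B = blaschkeProd α a from funext hB]
    exact Set.image_congr fun z hz => norm_deriv_blaschkeProd hα ha (by simpa using hz)
  rw [himage] at hM hm
  have hK := (isCompact_sphere (0 : ℂ) 1).image_of_continuousOn (continuousOn_poissonSum ha)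
  obtain ⟨z₀, hz₀, hmin⟩ := hK.sInf_mem ((NormedSpace.sphere_nonempty.2 zero_le_one).image _)
  have hmax : ∀ z : ℂ, ‖z‖ = 1 → poissonSum a z ≤ M := fun z hz =>
    hM ▸ le_csSup hK.bddAbove ⟨z, by simpa using hz, rfl⟩
  have key := inv_one_add_poissonSum_add_card_mul_le_one hα ha hmax (by simpa using hz₀)
  rw [hmin, ← hm, Fintype.card_fin] at key
  exact div_le_of_inv_one_add_add_mul_inv_le_one n.cast_nonneg
    (hm ▸ hmin ▸ poissonSum_nonneg (fun k => (ha k).le) z₀) key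

/-- For a Blaschke product of degree `n`, with `M = sup_{|z|=1}|B'|` and
`m = inf_{|z|=1}|B'|`, one has `m ≥ n/(M - n + 1)`. -/
theorem inf_ge_of_sup (n : ℕ) (hn : 1 ≤ n) (a : Fin n → ℂ)
    (ha : ∀ k, ‖a k‖ < 1) (α : ℂ) (hα : ‖α‖ = 1)
    (B : ℂ → ℂ)
    (hB : ∀ z, B z = α * ∏ k, (z - a k) / (1 - (starRingEnd ℂ) (a k) * z))
    (M m : ℝ)
    (hM : M = sSup ((fun z => ‖deriv B z‖) '' {z : ℂ | ‖z‖ = 1}))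
    (hm : m = sInf ((fun z => ‖deriv B z‖) '' {z : ℂ | ‖z‖ = 1})) :
    n / (M - n + 1) ≤ m :=
  inf_ge_of_sup_general n a ha α hα B hB M m hM hm
end

section
/- Let a, b, c be complex numbers with c = a - b + 1 and a = -n a negative integer, with c ∉ {a, a+1, …, 0, 1}. Define the hypergeometric polynomials f(z) = F(a, b+1; c+1; z), g(z) = F(a, b-1; c-1; z), h(z) = F(a, b; c; z), where F is the terminating Gauss hypergeometric series ∑_{k=0}^{n} ((a)_k (b)_k/(c)_k)(z^k/k!). Then for all complex z: z(f(z)g'(z) - f'(z)g(z)) = c(f(z)g(z) - h(z)²). -/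
open Finset in
/-- The terminating Gauss hypergeometric series
`F(a, b; c; z) = ∑_{k=0}^{n} ((a)_k (b)_k/(c)_k) z^k/k!`. -/
noncomputable def hyperPoly (n : ℕ) (a b c : ℂ) (z : ℂ) : ℂ :=
  ∑ k ∈ range (n + 1),
    ((ascPochhammer ℂ k).eval a * (ascPochhammer ℂ k).eval b /
      (ascPochhammer ℂ k).eval c) * z ^ k / (Nat.factorial k)

/-!
The three polynomials are linked by contiguous relations, each checked coefficientwise from the
ratio of consecutive Pochhammer symbols (`a = -n` makes both sides terminate at degree `n`):
`c H' = b (a + z d/dz) F`, the same relation `(c - 1) G' = (b - 1) (a + z d/dz) H` for the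
parameters shifted down, and, because `c = a - b + 1`, the three-term relation
`c (c - 1) G = c (c - 1) (1 - z) H + b (b - 1) z F`. The Wronskian identity is a linear
combination of these relations and the derivative of the last one.
-/

open Polynomial Finset

theorem ascPochhammer_eval_succ_left {S : Type*} [CommSemiring S] (x : S) (k : ℕ) :
    (ascPochhammer S (k + 1)).eval x = x * (ascPochhammer S k).eval (x + 1) := by
  simp [ascPochhammer_succ_left, eval_comp]

theorem coeff_X_mul_derivative {R : Type*} [Semiring R] (p : R[X]) (k : ℕ) :
    (X * derivative p).coeff k = p.coeff k * k := by
  rcases k with _ | k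
  · simp
  · rw [coeff_X_mul, coeff_derivative, Nat.cast_succ]

section

variable {K : Type*} [Field K]

noncomputable def hyperCoeff (a b c : K) (k : ℕ) : K :=
  (ascPochhammer K k).eval a * (ascPochhammer K k).eval b /
    (ascPochhammer K k).eval c / k.factorial

noncomputable def hyperPolynomial (n : ℕ) (a b c : K) : K[X] :=
  ∑ k ∈ range (n + 1), monomial k (hyperCoeff a b c k)

theorem hyperCoeff_succ (a b c : K) (k : ℕ) :
    hyperCoeff a b c (k + 1) = hyperCoeff a b c k * ((a + k) * (b + k)) / ((c + k) * (k + 1)) := by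
  simp only [hyperCoeff, ascPochhammer_succ_eval, Nat.factorial_succ, Nat.cast_mul,
    Nat.cast_succ, div_eq_mul_inv, mul_inv]
  ring

theorem hyperCoeff_sub_one_succ (a b c : K) (k : ℕ) :
    hyperCoeff a (b - 1) (c - 1) (k + 1)
      = hyperCoeff a b c k * ((a + k) * (b - 1)) / ((c - 1) * (k + 1)) := by
  rw [hyperCoeff, hyperCoeff, ascPochhammer_succ_eval k a, ascPochhammer_eval_succ_left (b - 1),
    ascPochhammer_eval_succ_left (c - 1)]
  simp only [sub_add_cancel, Nat.factorial_succ, Nat.cast_mul, Nat.cast_succ, div_eq_mul_inv,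
    mul_inv]
  ring

theorem mul_hyperCoeff_add_one {c : K} (hc : c ≠ 0) (a b : K) (k : ℕ) :
    b * hyperCoeff a (b + 1) (c + 1) k = c * hyperCoeff a b c k * (b + k) / (c + k) := by
  have hb : b * (ascPochhammer K k).eval (b + 1) = (ascPochhammer K k).eval b * (b + k) := by
    rw [← ascPochhammer_eval_succ_left, ascPochhammer_succ_eval]
  have hc' : c * (ascPochhammer K k).eval (c + 1) = (ascPochhammer K k).eval c * (c + k) := by
    rw [← ascPochhammer_eval_succ_left, ascPochhammer_succ_eval]
  calc b * hyperCoeff a (b + 1) (c + 1) k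
      = c * ((ascPochhammer K k).eval a * (b * (ascPochhammer K k).eval (b + 1)))
          / (c * (ascPochhammer K k).eval (c + 1)) / k.factorial := by
        rw [hyperCoeff, mul_div_mul_left _ _ hc]; ring
    _ = _ := by rw [hb, hc', hyperCoeff]; simp only [div_eq_mul_inv, mul_inv]; ring

theorem hyperCoeff_eq_zero_of_lt {n k : ℕ} {a : K} (ha : a = -n) (b c : K) (hk : n < k) :
    hyperCoeff a b c k = 0 := by
  rw [hyperCoeff, ha, ascPochhammer_eval_neg_coe_nat_of_lt hk, zero_mul, zero_div, zero_div]

theorem coeff_hyperPolynomial {n : ℕ} {a : K} (ha : a = -n) (b c : K) (k : ℕ) :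
    (hyperPolynomial n a b c).coeff k = hyperCoeff a b c k := by
  simp only [hyperPolynomial, finsetSum_coeff, coeff_monomial, sum_ite_eq', mem_range]
  split_ifs with hk
  · rfl
  · exact (hyperCoeff_eq_zero_of_lt ha b c (by omega)).symm

variable [CharZero K]

theorem C_mul_derivative_hyperPolynomial {n : ℕ} {a c : K} (ha : a = -n) (hc : c ≠ 0) (b : K) :
    C c * derivative (hyperPolynomial n a b c)
      = C b * (C a * hyperPolynomial n a (b + 1) (c + 1)
          + X * derivative (hyperPolynomial n a (b + 1) (c + 1))) := by
  ext k
  have hk : (k : K) + 1 ≠ 0 := by exact_mod_cast k.succ_ne_zero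
  simp only [coeff_C_mul, coeff_add, coeff_derivative, coeff_X_mul_derivative,
    coeff_hyperPolynomial ha]
  rw [hyperCoeff_succ, ← div_div, div_mul_cancel₀ _ hk]
  linear_combination -(a + k) * mul_hyperCoeff_add_one hc a b k

theorem C_mul_hyperPolynomial_sub_one {n : ℕ} {a b c : K} (ha : a = -n) (hcab : c = a - b + 1)
    (hc0 : c ≠ 0) (hc1 : c ≠ 1) (hcn : ∀ k ≤ n, c + k ≠ 0) :
    C (c * (c - 1)) * hyperPolynomial n a (b - 1) (c - 1)
      = C (c * (c - 1)) * ((1 - X) * hyperPolynomial n a b c)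
        + C (b * (b - 1)) * (X * hyperPolynomial n a (b + 1) (c + 1)) := by
  ext k
  simp only [coeff_C_mul, coeff_add, sub_mul, one_mul, coeff_sub, coeff_hyperPolynomial ha]
  rcases k with _ | k
  · simp [hyperCoeff]
  rw [coeff_X_mul, coeff_X_mul, coeff_hyperPolynomial ha, coeff_hyperPolynomial ha]
  by_cases hkn : n < k
  · simp [hyperCoeff_succ, hyperCoeff_eq_zero_of_lt ha _ _ hkn]
  have hck := hcn k (by omega)
  have hk : (k : K) + 1 ≠ 0 := by exact_mod_cast k.succ_ne_zero
  have hc1' : c - 1 ≠ 0 := sub_ne_zero.2 hc1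
  rw [hyperCoeff_sub_one_succ, hyperCoeff_succ, mul_right_comm b,
    mul_hyperCoeff_add_one hc0]
  obtain rfl : a = c + b - 1 := by rw [hcab]; ring
  field_simp
  ring

end

theorem wronskian_eq_of_contiguous {K : Type*} [Field K] {a b c : K} (hcab : c = a - b + 1)
    (ha : a ≠ 1) (hb : b ≠ 0) (hc0 : c ≠ 0) (hc1 : c ≠ 1) {z F G H F' G' H' : K}
    (hA : c * H' = b * (a * F + z * F'))
    (hB : (c - 1) * G' = (b - 1) * (a * H + z * H'))
    (hC : c * (c - 1) * G = c * (c - 1) * ((1 - z) * H) + b * (b - 1) * (z * F))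
    (hC' : c * (c - 1) * G' = c * (c - 1) * ((1 - z) * H' - H) + b * (b - 1) * (F + z * F')) :
    z * (F * G' - F' * G) = c * (F * G - H ^ 2) := by
  have hne : (a - 1) * b * c * (c - 1) ≠ 0 :=
    mul_ne_zero (mul_ne_zero (mul_ne_zero (sub_ne_zero.2 ha) hb) hc0) (sub_ne_zero.2 hc1)
  -- Eliminating `F'` and `G'` expresses `F` and `G` through `H` and `H'`; this divides by `hne`.
  apply mul_left_cancel₀ hne
  linear_combination (norm := (rw [hcab]; ring))
      ((a - 1) * c * (c - 1) * (1 - z) * H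
          + (b - 1) * (c - 1) * (b * z * F - c * H)) * hA
      + c * (c - 1) * (b * z * F - c * H) * hB
      - (a - 1) * b * (z * F' + c * F) * hC
      + ((a - 1) * b * z * F - (c - 1) * (b * z * F - c * H)) * hC'

theorem hyperPoly_eq_eval (n : ℕ) (a b c : ℂ) :
    hyperPoly n a b c = fun z => (hyperPolynomial n a b c).eval z := by
  funext z
  simp only [hyperPoly, hyperPolynomial, eval_finsetSum, eval_monomial, hyperCoeff]
  exact sum_congr rfl fun k _ => by ring

theorem hypergeometric_wronskian_identity_general (n : ℕ) (a b c : ℂ)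
    (ha : a = -(n : ℂ)) (hc : c = a - b + 1)
    (hcne : ∀ j : ℤ, -(n : ℤ) ≤ j → j ≤ 1 → c ≠ (j : ℂ))
    (f g h : ℂ → ℂ)
    (hf : f = hyperPoly n a (b + 1) (c + 1))
    (hg : g = hyperPoly n a (b - 1) (c - 1))
    (hh : h = hyperPoly n a b c) :
    ∀ z : ℂ, z * (f z * deriv g z - deriv f z * g z) = c * (f z * g z - h z ^ 2) := by
  intro z
  have hcn : ∀ k ≤ n, c + k ≠ 0 := fun k hk hck =>
    hcne (-k) (by omega) (by omega) (by push_cast; linear_combination hck)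
  have hc0 : c ≠ 0 := by simpa using hcn 0 n.zero_le
  have hc1 : c ≠ 1 := by exact_mod_cast hcne 1 (by omega) le_rfl
  have hb : b ≠ 0 := fun hb =>
    hcne (1 - n) (by omega) (by omega) (by rw [hc, ha, hb]; push_cast; ring)
  have ha1 : a ≠ 1 := by rw [ha]; exact_mod_cast (by omega : -(n : ℤ) ≠ 1)
  have hA := congrArg (eval z) (C_mul_derivative_hyperPolynomial ha hc0 b)
  have hB := congrArg (eval z) (C_mul_derivative_hyperPolynomial ha (sub_ne_zero.2 hc1) (b - 1))
  have hC := C_mul_hyperPolynomial_sub_one ha hc hc0 hc1 hcn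
  have hC' := congrArg (eval z) (congrArg derivative hC)
  replace hC := congrArg (eval z) hC
  simp only [sub_add_cancel, derivative_add, derivative_mul, derivative_C, derivative_sub,
    derivative_one, derivative_X, eval_mul, eval_add, eval_sub, eval_C, eval_X, eval_one,
    eval_zero] at hA hB hC hC'
  subst hf hg hh
  simp only [hyperPoly_eq_eval, Polynomial.deriv]
  exact wronskian_eq_of_contiguous hc ha1 hb hc0 hc1 hA hB hC (by linear_combination hC')

/-- Wronskian-type identity for contiguous hypergeometric polynomials:
with `a = -n`, `c = a - b + 1`, `c ∉ {a, a+1, …, 0, 1}`, and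
`f = F(a,b+1;c+1;·)`, `g = F(a,b-1;c-1;·)`, `h = F(a,b;c;·)`, one has
`z(fg' - f'g) = c(fg - h²)` for all `z`. -/
theorem hypergeometric_wronskian_identity (n : ℕ) (hn : 1 ≤ n) (a b c : ℂ)
    (ha : a = -(n : ℂ)) (hc : c = a - b + 1)
    (hcne : ∀ j : ℤ, -(n : ℤ) ≤ j → j ≤ 1 → c ≠ (j : ℂ))
    (f g h : ℂ → ℂ)
    (hf : f = hyperPoly n a (b + 1) (c + 1))
    (hg : g = hyperPoly n a (b - 1) (c - 1))
    (hh : h = hyperPoly n a b c) :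
    ∀ z : ℂ, z * (f z * deriv g z - deriv f z * g z) = c * (f z * g z - h z ^ 2) :=
  hypergeometric_wronskian_identity_general n a b c ha hc hcne f g h hf hg hh
end

section
/- Fix n ∈ ℕ, n ≥ 1, and a real ν with -1 < ν < 0. The polynomial p(z) = ∑_{k=0}^n a_k z^k with a_k = (-n)_k (ν+2)_k / ((-n+1-ν)_k · k!) has positive coefficients a_0, …, a_{n-1}, negative leading coefficient a_n, and satisfies p(1) = (2ν+2)_n/(ν)_n < 0; consequently |a_n| > ∑_{k=0}^{n-1}|a_k|, and all zeros of p lie in the open unit disk. -/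
/-! Reflecting the Pochhammer symbol, `(x)_m = (-1)^m (1-m-x)_m`, turns the coefficients into
`a_k = C(n,k) (ν+2)_k (ν)_{n-k} / (ν)_n`, and for `-1 < ν < 0` the symbol `(ν)_m` is negative for
every `m ≥ 1`, so `a_k > 0` for `k < n`. The Chu–Vandermonde identity sums the coefficients to
`p(1) = (2ν+2)_n / (ν)_n < 0`, hence `|a_n|` exceeds `∑_{k<n} |a_k|`. A zero `z` with `|z| ≥ 1`
would then give `|a_n| |z|^n ≤ ∑_{k<n} |a_k| |z|^k < |a_n| |z|^n`. -/

open Finset Polynomial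

section CommRing

variable {R : Type*} [CommRing R]

theorem ascPochhammer_eval_reflect (x : R) (m : ℕ) :
    (ascPochhammer R m).eval x = (-1) ^ m * (ascPochhammer R m).eval (1 - m - x) := by
  rw [← neg_neg x, ascPochhammer_eval_neg_eq_descPochhammer, descPochhammer_eval_eq_ascPochhammer]
  ring_nf

theorem ascPochhammer_eval_reflect_mul (x : R) (k m : ℕ) :
    (ascPochhammer R k).eval (1 - (k + m : ℕ) - x) * (ascPochhammer R m).eval x =
      (-1) ^ k * (ascPochhammer R (k + m)).eval x := by
  have hsplit := congrArg (eval (1 - (k + m : ℕ) - x)) (ascPochhammer_mul R k m)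
  simp only [eval_mul, eval_comp, eval_add, eval_X, eval_natCast] at hsplit
  have hsq (c : R) : (-1) ^ k * ((-1) ^ k * c) = c := by
    rw [← mul_assoc, ← mul_pow, neg_one_mul, neg_neg, one_pow, one_mul]
  rw [ascPochhammer_eval_reflect x (k + m), ← hsplit, ascPochhammer_eval_reflect x m,
    Nat.cast_add, show 1 - (k + m : R) - x + k = 1 - m - x by ring, pow_add, mul_assoc, hsq]
  ring

theorem ascPochhammer_eval_neg_natCast (n k : ℕ) :
    (ascPochhammer R k).eval (-(n : R)) = (-1) ^ k * (k.factorial * n.choose k : ℕ) := by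
  rw [ascPochhammer_eval_neg_eq_descPochhammer, descPochhammer_eval_eq_descFactorial,
    Nat.descFactorial_eq_factorial_mul_choose]

theorem ascPochhammer_eval_add (x y : R) (n : ℕ) :
    (ascPochhammer R n).eval (x + y) = ∑ ij ∈ antidiagonal n,
      n.choose ij.1 * ((ascPochhammer R ij.1).eval x * (ascPochhammer R ij.2).eval y) := by
  induction n with
  | zero => simp
  | succ n ih =>
    rw [ascPochhammer_succ_eval, ih, sum_antidiagonal_choose_succ_mul
      (fun i j => (ascPochhammer R i).eval x * (ascPochhammer R j).eval y), sum_mul,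
      ← sum_add_distrib]
    refine sum_congr rfl fun ij hij => ?_
    rw [HasAntidiagonal.mem_antidiagonal] at hij
    rw [← hij, Nat.choose_symm_add, ascPochhammer_succ_eval, ascPochhammer_succ_eval]
    push_cast
    ring

end CommRing

theorem ascPochhammer_eval_neg_of_neg_one_lt_of_neg {S : Type*} [CommRing S] [PartialOrder S]
    [IsStrictOrderedRing S] {x : S} (hx₁ : -1 < x) (hx₂ : x < 0) {m : ℕ} (hm : m ≠ 0) :
    (ascPochhammer S m).eval x < 0 := by
  obtain ⟨j, rfl⟩ := Nat.exists_eq_succ_of_ne_zero hm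
  rw [ascPochhammer_succ_left, eval_mul, eval_X, eval_comp, eval_add, eval_X, eval_one]
  exact mul_neg_of_neg_of_pos hx₂ (ascPochhammer_pos _ _ (neg_lt_iff_pos_add.mp hx₁))

section Field

variable {K : Type*} [Field K] [CharZero K]

theorem ordinaryHypergeometricCoefficient_neg_natCast {n k : ℕ} (hk : k ≤ n) (x y : K)
    (hx : (ascPochhammer K n).eval x ≠ 0) :
    ordinaryHypergeometricCoefficient (-(n : K)) y (-(n : K) + 1 - x) k =
      n.choose k * (ascPochhammer K k).eval y * (ascPochhammer K (n - k)).eval x /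
        (ascPochhammer K n).eval x := by
  obtain ⟨m, rfl⟩ := Nat.exists_eq_add_of_le hk
  have hreflect := ascPochhammer_eval_reflect_mul x k m
  rw [show 1 - ((k + m : ℕ) : K) - x = -((k + m : ℕ) : K) + 1 - x by ring] at hreflect
  have hc : (ascPochhammer K k).eval (-((k + m : ℕ) : K) + 1 - x) ≠ 0 := by
    refine left_ne_zero_of_mul (b := (ascPochhammer K m).eval x) ?_
    rw [hreflect]
    exact mul_ne_zero (pow_ne_zero _ (by norm_num)) hx
  have hfact : (k.factorial : K) ≠ 0 := Nat.cast_ne_zero.mpr k.factorial_ne_zero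
  rw [ordinaryHypergeometricCoefficient, ascPochhammer_eval_neg_natCast, Nat.add_sub_cancel_left]
  field_simp
  push_cast at hreflect ⊢
  linear_combination (-(k.factorial * (k + m).choose k : K) * (ascPochhammer K k).eval y) * hreflect

theorem sum_ordinaryHypergeometricCoefficient_neg_natCast (n : ℕ) (x y : K)
    (hx : (ascPochhammer K n).eval x ≠ 0) :
    ∑ k ∈ range (n + 1), ordinaryHypergeometricCoefficient (-(n : K)) y (-(n : K) + 1 - x) k =
      (ascPochhammer K n).eval (y + x) / (ascPochhammer K n).eval x := by
  rw [ascPochhammer_eval_add, Nat.sum_antidiagonal_eq_sum_range_succ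
    (fun i j => (n.choose i : K) * ((ascPochhammer K i).eval y * (ascPochhammer K j).eval x)),
    sum_div]
  refine sum_congr rfl fun k hk => ?_
  rw [ordinaryHypergeometricCoefficient_neg_natCast (Nat.lt_succ_iff.mp (mem_range.mp hk)) x y hx,
    mul_assoc]

end Field

theorem norm_lt_one_of_sum_mul_pow_eq_zero {𝕜 : Type*} [NormedDivisionRing 𝕜] {n : ℕ}
    {c : ℕ → 𝕜} (hc : ∑ k ∈ range n, ‖c k‖ < ‖c n‖) {z : 𝕜}
    (hz : ∑ k ∈ range (n + 1), c k * z ^ k = 0) : ‖z‖ < 1 := by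
  by_contra! hz₁
  rw [sum_range_succ, add_eq_zero_iff_eq_neg'] at hz
  have hpow : 0 < ‖z‖ ^ n := pow_pos (by linarith) n
  have : ‖c n‖ * ‖z‖ ^ n < ‖c n‖ * ‖z‖ ^ n := calc
    ‖c n‖ * ‖z‖ ^ n = ‖∑ k ∈ range n, c k * z ^ k‖ := by rw [← norm_pow, ← norm_mul, hz, norm_neg]
    _ ≤ ∑ k ∈ range n, ‖c k‖ * ‖z‖ ^ k := by
      refine (norm_sum_le _ _).trans_eq (sum_congr rfl fun k _ => ?_)
      rw [norm_mul, norm_pow]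
    _ ≤ ∑ k ∈ range n, ‖c k‖ * ‖z‖ ^ n := by
      refine sum_le_sum fun k hk => ?_
      exact mul_le_mul_of_nonneg_left (pow_le_pow_right₀ hz₁ (mem_range.mp hk).le) (norm_nonneg _)
    _ < ‖c n‖ * ‖z‖ ^ n := by rw [← sum_mul]; exact mul_lt_mul_of_pos_right hc hpow
  exact lt_irrefl _ this

open Finset in
/-- For `n ≥ 1` and `-1 < ν < 0`, the coefficients
`a_k = (-n)_k (ν+2)_k / ((-n+1-ν)_k k!)` of the hypergeometric polynomial
`F(-n, ν+2; -n+1-ν; ·)` satisfy: `a_0,…,a_{n-1} > 0`, `a_n < 0`,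
`p(1) = (2ν+2)_n/(ν)_n < 0`, hence `|a_n| > ∑_{k<n}|a_k|`, and all zeros of
the polynomial lie in the open unit disk. -/
theorem hypergeometric_zeros_in_disk (n : ℕ) (hn : 1 ≤ n) (ν : ℝ)
    (hν₁ : -1 < ν) (hν₂ : ν < 0) (a : ℕ → ℝ)
    (ha : ∀ k, a k =
      (ascPochhammer ℝ k).eval (-(n : ℝ)) * (ascPochhammer ℝ k).eval (ν + 2) /
        ((ascPochhammer ℝ k).eval (-(n : ℝ) + 1 - ν) * (Nat.factorial k))) :
    (∀ k < n, 0 < a k) ∧ a n < 0 ∧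
      (∑ k ∈ range (n + 1), a k =
        (ascPochhammer ℝ n).eval (2 * ν + 2) / (ascPochhammer ℝ n).eval ν) ∧
      (∑ k ∈ range (n + 1), a k) < 0 ∧
      (∑ k ∈ range n, |a k|) < |a n| ∧
      ∀ z : ℂ, (∑ k ∈ range (n + 1), (a k : ℂ) * z ^ k) = 0 → ‖z‖ < 1 := by
  have hpoch : ∀ {m}, m ≠ 0 → (ascPochhammer ℝ m).eval ν < 0 :=
    ascPochhammer_eval_neg_of_neg_one_lt_of_neg hν₁ hν₂
  have hpoch_n : (ascPochhammer ℝ n).eval ν ≠ 0 := (hpoch (by omega)).ne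
  have ha' : a = ordinaryHypergeometricCoefficient (-(n : ℝ)) (ν + 2) (-(n : ℝ) + 1 - ν) :=
    funext fun k => by rw [ha, ordinaryHypergeometricCoefficient]; ring
  have hpos (k : ℕ) (hk : k < n) : 0 < a k := by
    rw [ha', ordinaryHypergeometricCoefficient_neg_natCast hk.le ν (ν + 2) hpoch_n]
    refine div_pos_of_neg_of_neg (mul_neg_of_pos_of_neg ?_ (hpoch (by omega))) (hpoch (by omega))
    exact mul_pos (mod_cast Nat.choose_pos hk.le) (ascPochhammer_pos _ _ (by linarith))
  have hsum : ∑ k ∈ range (n + 1), a k =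
      (ascPochhammer ℝ n).eval (2 * ν + 2) / (ascPochhammer ℝ n).eval ν := by
    rw [ha', sum_ordinaryHypergeometricCoefficient_neg_natCast n ν (ν + 2) hpoch_n,
      show ν + 2 + ν = 2 * ν + 2 by ring]
  have hsum_neg : ∑ k ∈ range (n + 1), a k < 0 := by
    rw [hsum]
    exact div_neg_of_pos_of_neg (ascPochhammer_pos _ _ (by linarith)) (hpoch (by omega))
  have hlead : a n < 0 := by
    linarith [sum_range_succ a n, sum_nonneg fun k hk => (hpos k (mem_range.mp hk)).le]
  have hdom : ∑ k ∈ range n, |a k| < |a n| := by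
    rw [sum_congr rfl fun k hk => abs_of_pos (hpos k (mem_range.mp hk)), abs_of_neg hlead]
    linarith [sum_range_succ a n]
  refine ⟨hpos, hlead, hsum, hsum_neg, hdom, fun z hz => ?_⟩
  refine norm_lt_one_of_sum_mul_pow_eq_zero ?_ hz
  simpa only [Complex.norm_real, Real.norm_eq_abs] using hdom
end

section
/- Let P(a,z) = (1-|a|²)/|z-a|² be the Poisson kernel for a in the open unit disk and z on the unit circle. For 0 < δ < 1 and w ∈ 𝔻, z ∈ 𝕋: P(δw, z) = (1/2π)∫₀^{2π} P(w, e^{iθ}) P(δ, e^{-iθ} z) dθ (semigroup property of the Poisson kernel). -/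
/-!
For `z ∈ 𝕋` and `|δ| < 1`, the function `ζ ↦ P(δζ, z) = Re ((z + δζ) / (z - δζ))` is harmonic on a
neighbourhood of the closed disk, so the Poisson integral formula reproduces its value at `w`.
On the circle, rotation invariance of the kernel turns `P(δ e^{iθ}, z)` into `P(δ, e^{-iθ} z)`.
-/

/-- The Poisson kernel `P(a,z) = (1-|a|²)/|z-a|²`. -/
noncomputable def poissonK (a z : ℂ) : ℝ :=
  (1 - ‖a‖ ^ 2) / ‖z - a‖ ^ 2

open Complex Metric InnerProductSpace

theorem poissonK_eq_poissonKernel (a : ℂ) {z : ℂ} (hz : ‖z‖ = 1) :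
    poissonK a z = poissonKernel 0 a z := by
  simp [poissonK, poissonKernel_def, hz]

theorem poissonK_mul_left {u : ℂ} (hu : ‖u‖ = 1) (a z : ℂ) :
    poissonK (u * a) (u * z) = poissonK a z := by
  simp only [poissonK, ← mul_sub, norm_mul, hu, one_mul]

theorem harmonicOnNhd_poissonK_mul {c z : ℂ} (hc : ‖c‖ < 1) (hz : ‖z‖ = 1) :
    HarmonicOnNhd (fun ζ ↦ poissonK (c * ζ) z) (closedBall 0 1) := by
  intro ζ hζ
  have hne : z - c * ζ ≠ 0 := by
    rw [sub_ne_zero]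
    rintro rfl
    rw [mem_closedBall_zero_iff] at hζ
    rw [norm_mul] at hz
    nlinarith [norm_nonneg c, norm_nonneg ζ]
  have hre : (fun ζ ↦ poissonK (c * ζ) z) = re ∘ fun ζ ↦ (z + c * ζ) / (z - c * ζ) := by
    ext ζ
    simp [poissonK_eq_poissonKernel _ hz, poissonKernel_eq_re_herglotzRieszKernel,
      herglotzRieszKernel_def]
  rw [hre]
  exact AnalyticAt.harmonicAt_re (by fun_prop (disch := exact hne))

/-- Semigroup property of the Poisson kernel: for `0 < δ < 1`, `w ∈ 𝔻`, `z ∈ 𝕋`,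
`P(δw, z) = (1/2π)∫₀^{2π} P(w, e^{iθ}) P(δ, e^{-iθ} z) dθ`. -/
theorem poisson_semigroup (δ : ℝ) (hδ0 : 0 < δ) (hδ1 : δ < 1)
    (w : ℂ) (hw : ‖w‖ < 1) (z : ℂ) (hz : ‖z‖ = 1) :
    poissonK (δ * w) z =
      (1 / (2 * Real.pi)) *
        ∫ θ in (0 : ℝ)..(2 * Real.pi),
          poissonK w (Complex.exp (θ * Complex.I)) *
            poissonK (δ : ℂ) (Complex.exp (-θ * Complex.I) * z) := by
  have hδ : ‖(δ : ℂ)‖ < 1 := by rwa [norm_real, Real.norm_of_nonneg hδ0.le]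
  have hpoisson := (harmonicOnNhd_poissonK_mul hδ hz).circleAverage_poissonKernel_smul
    (mem_ball_zero_iff.2 hw)
  rw [Real.circleAverage_def, smul_eq_mul] at hpoisson
  rw [← hpoisson, one_div]
  congr 1
  refine intervalIntegral.integral_congr fun θ _ ↦ ?_
  have hu : ‖exp (θ * I)‖ = 1 := norm_exp_ofReal_mul_I θ
  have hrot : exp (θ * I) * (exp (-θ * I) * z) = z := by
    rw [← mul_assoc, ← Complex.exp_add]; simp
  simp only [circleMap_zero, ofReal_one, one_mul, Pi.smul_apply', smul_eq_mul]
  rw [poissonK_eq_poissonKernel w hu, ← poissonK_mul_left hu δ, hrot, mul_comm (exp _)]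
end
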